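/- arXiv:2401.11565 — 3 statements merged into one kernel-verified Lean document; each statement's English description precedes it below -/
import Mathlib

section
/- Let λ > 0 and σ > 0 with σ²/λ ≥ 1, let T ≥ 1, and let φ_1, …, φ_T ∈ ℝ^m with ‖φ_t‖₂ ≤ 1 for all t. Define Σ_0 = (1/λ) I_m and Σ_t = (1/λ) I_m + (1/σ²) Σ_{τ=1}^t φ_τ φ_τᵀ for t ≥ 1. Then Σ_{t=1}^T φ_tᵀ Σ_{t−1}⁻¹ φ_t ≤ 2 m σ² log(1 + Tλ/(m σ²)). -/
/-!
Write `q_t = φ_tᵀ Σ_{t-1}⁻¹ φ_t`. The matrix determinant lemma gives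
`det Σ_t = det Σ_{t-1} (1 + q_t / σ²)`, so `∑ log (1 + q_t / σ²) = log det Σ_T - log det Σ_0`.
AM-GM on the eigenvalues bounds `det Σ_T` by `(tr Σ_T / m)^m ≤ (1/λ + T/(mσ²))^m`.
Finally `Σ_{t-1} ⪰ I/λ` gives `q_t ≤ λ ≤ σ²`, and `x ≤ 2 log (1 + x)` on `[0, 1]` turns the
sum of logarithms into a bound on `∑ q_t`.
-/

open Matrix Finset Real

theorem Finset.prod_le_sum_div_card_pow {ι : Type*} (s : Finset ι) {f : ι → ℝ}
    (hf : ∀ i ∈ s, 0 ≤ f i) : ∏ i ∈ s, f i ≤ ((∑ i ∈ s, f i) / #s) ^ #s := by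
  rcases s.eq_empty_or_nonempty with rfl | hs
  · simp
  have amgm := geom_mean_le_arith_mean s (fun _ ↦ 1) f (fun _ _ ↦ zero_le_one)
    (by simpa using hs.card_pos) hf
  simp only [rpow_one, one_mul, sum_const, nsmul_eq_mul, mul_one] at amgm
  calc ∏ i ∈ s, f i = ((∏ i ∈ s, f i) ^ ((#s : ℝ)⁻¹)) ^ #s :=
        (rpow_inv_natCast_pow (prod_nonneg hf) hs.card_pos.ne').symm
    _ ≤ ((∑ i ∈ s, f i) / #s) ^ #s := by gcongr; exact rpow_nonneg (prod_nonneg hf) _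

theorem Real.le_two_mul_log_one_add {x : ℝ} (hx₀ : 0 ≤ x) (hx₁ : x ≤ 1) :
    x ≤ 2 * log (1 + x) := by
  have hlog := one_sub_inv_le_log_of_pos (by linarith : 0 < 1 + x)
  have hsub : 1 - (1 + x)⁻¹ = x / (1 + x) := by field_simp; ring
  have : x / 2 ≤ x / (1 + x) := div_le_div_of_nonneg_left hx₀ (by linarith) (by linarith)
  linarith

namespace Matrix

variable {n : Type*} [Fintype n] [DecidableEq n]

theorem det_add_vecMulVec {R : Type*} [CommRing R] {A : Matrix n n R} (hA : IsUnit A.det)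
    (u v : n → R) : (A + vecMulVec u v).det = A.det * (1 + v ⬝ᵥ A⁻¹ *ᵥ u) := by
  rw [vecMulVec_eq Unit, det_add_replicateCol_mul_replicateRow hA, Matrix.mul_assoc,
    ← replicateCol_mulVec, det_unique (1 + _)]
  simp [replicateRow_mul_replicateCol_apply]

theorem PosSemidef.det_le_trace_div_card_pow {A : Matrix n n ℝ} (hA : A.PosSemidef) :
    A.det ≤ (A.trace / Fintype.card n) ^ Fintype.card n := by
  rw [hA.isHermitian.det_eq_prod_eigenvalues, hA.isHermitian.trace_eq_sum_eigenvalues]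
  exact mod_cast prod_le_sum_div_card_pow univ fun i _ ↦ hA.eigenvalues_nonneg i

/-- With `y = A⁻¹ x`, the hypothesis gives `c ‖y‖² ≤ ⟪x, y⟫`, and `0 ≤ ‖x - c y‖²` then yields
`c ⟪x, y⟫ ≤ ‖x‖²`. -/
theorem PosDef.dotProduct_inv_mulVec_le {A : Matrix n n ℝ} (hA : A.PosDef) {c : ℝ} (hc : 0 < c)
    (hAc : (A - c • 1).PosSemidef) (x : n → ℝ) : x ⬝ᵥ A⁻¹ *ᵥ x ≤ (x ⬝ᵥ x) / c := by
  set y := A⁻¹ *ᵥ x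
  have hAy : A *ᵥ y = x := by
    rw [mulVec_mulVec, mul_nonsing_inv _ hA.det_pos.ne'.isUnit, one_mulVec]
  have hyy : c * (y ⬝ᵥ y) ≤ x ⬝ᵥ y := by
    have := hAc.dotProduct_mulVec_nonneg y
    rw [star_trivial, sub_mulVec, smul_mulVec, one_mulVec, dotProduct_sub, dotProduct_smul, hAy,
      dotProduct_comm, smul_eq_mul] at this
    linarith
  have hsq : 0 ≤ (x - c • y) ⬝ᵥ (x - c • y) := by
    simpa using dotProduct_star_self_nonneg (x - c • y)
  simp only [sub_dotProduct, dotProduct_sub, smul_dotProduct, dotProduct_smul, smul_eq_mul,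
    dotProduct_comm y x] at hsq
  rw [le_div_iff₀ hc]
  nlinarith [mul_le_mul_of_nonneg_left hyy hc.le]

end Matrix

section DesignMatrix

variable {n : Type*}

theorem posSemidef_sum_vecMulVec_self [Fintype n] (φ : ℕ → n → ℝ) (s : Finset ℕ) :
    (∑ τ ∈ s, vecMulVec (φ τ) (φ τ)).PosSemidef :=
  posSemidef_sum s fun τ _ ↦ by simpa using posSemidef_vecMulVec_self_star (φ τ)

variable [DecidableEq n]

/-- With `a = 1/λ`, `b = 1/σ²` and `φ` indexed from `0`, `designMatrix a b φ t` is the paper's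
`Σ_t`. -/
def designMatrix (a b : ℝ) (φ : ℕ → n → ℝ) (t : ℕ) : Matrix n n ℝ :=
  a • 1 + b • ∑ τ ∈ range t, vecMulVec (φ τ) (φ τ)

variable {a b : ℝ} {φ : ℕ → n → ℝ}

theorem designMatrix_succ (t : ℕ) :
    designMatrix a b φ (t + 1) = designMatrix a b φ t + vecMulVec (b • φ t) (φ t) := by
  rw [designMatrix, designMatrix, sum_range_succ, smul_add, smul_vecMulVec, add_assoc]

variable [Fintype n]

theorem designMatrix_posDef (ha : 0 < a) (hb : 0 ≤ b) (t : ℕ) : (designMatrix a b φ t).PosDef :=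
  (PosDef.one.smul ha).add_posSemidef <| (posSemidef_sum_vecMulVec_self φ _).smul hb

theorem det_designMatrix (ha : 0 < a) (hb : 0 ≤ b) (T : ℕ) :
    (designMatrix a b φ T).det =
      a ^ Fintype.card n * ∏ t ∈ range T, (1 + b * (φ t ⬝ᵥ (designMatrix a b φ t)⁻¹ *ᵥ φ t)) := by
  induction T with
  | zero => simp [designMatrix]
  | succ T ih =>
    rw [designMatrix_succ, det_add_vecMulVec (designMatrix_posDef ha hb T).det_pos.ne'.isUnit, ih,
      prod_range_succ, mulVec_smul, dotProduct_smul, smul_eq_mul, mul_assoc]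

theorem dotProduct_inv_designMatrix_mulVec_nonneg (ha : 0 < a) (hb : 0 ≤ b) (t : ℕ)
    (x : n → ℝ) : 0 ≤ x ⬝ᵥ (designMatrix a b φ t)⁻¹ *ᵥ x := by
  simpa using (designMatrix_posDef ha hb t).inv.posSemidef.dotProduct_mulVec_nonneg x

theorem dotProduct_inv_designMatrix_mulVec_le (ha : 0 < a) (hb : 0 ≤ b) (t : ℕ) (x : n → ℝ) :
    x ⬝ᵥ (designMatrix a b φ t)⁻¹ *ᵥ x ≤ (x ⬝ᵥ x) / a :=
  (designMatrix_posDef ha hb t).dotProduct_inv_mulVec_le ha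
    (by simpa [designMatrix] using (posSemidef_sum_vecMulVec_self φ _).smul hb) x

theorem trace_designMatrix_le (hb : 0 ≤ b) (hφ : ∀ t, φ t ⬝ᵥ φ t ≤ 1) (T : ℕ) :
    (designMatrix a b φ T).trace ≤ a * Fintype.card n + b * T := by
  have hsum : ∑ t ∈ range T, φ t ⬝ᵥ φ t ≤ T := by
    simpa using sum_le_sum fun t (_ : t ∈ range T) ↦ hφ t
  simp only [designMatrix, trace_add, trace_smul, trace_one, trace_sum, trace_vecMulVec,
    smul_eq_mul]
  gcongr

theorem sum_log_one_add_le (ha : 0 < a) (hb : 0 ≤ b) (hφ : ∀ t, φ t ⬝ᵥ φ t ≤ 1) (T : ℕ) :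
    ∑ t ∈ range T, log (1 + b * (φ t ⬝ᵥ (designMatrix a b φ t)⁻¹ *ᵥ φ t)) ≤
      Fintype.card n * log (1 + b * T / (a * Fintype.card n)) := by
  set m := Fintype.card n
  have hV := (designMatrix_posDef (φ := φ) ha hb T).posSemidef
  have hfactor : ∀ t, 0 < 1 + b * (φ t ⬝ᵥ (designMatrix a b φ t)⁻¹ *ᵥ φ t) := fun t ↦ by
    have := dotProduct_inv_designMatrix_mulVec_nonneg (φ := φ) ha hb t (φ t)
    positivity
  have htrace : (designMatrix a b φ T).trace / m ≤ a * (1 + b * T / (a * m)) := by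
    rcases Nat.eq_zero_or_pos m with hm | hm
    · simp [hm, ha.le]
    rw [div_le_iff₀ (by positivity), mul_add, mul_one, mul_div_assoc', mul_div_mul_left _ _ ha.ne',
      add_mul, div_mul_cancel₀ _ (by positivity)]
    exact trace_designMatrix_le hb hφ T
  have hprod : a ^ m * ∏ t ∈ range T, (1 + b * (φ t ⬝ᵥ (designMatrix a b φ t)⁻¹ *ᵥ φ t)) ≤
      a ^ m * (1 + b * T / (a * m)) ^ m := by
    rw [← det_designMatrix ha hb, ← mul_pow]
    exact hV.det_le_trace_div_card_pow.trans <|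
      pow_le_pow_left₀ (div_nonneg hV.trace_nonneg m.cast_nonneg) htrace m
  rw [← log_prod fun t _ ↦ (hfactor t).ne', ← log_pow]
  exact log_le_log (prod_pos fun t _ ↦ hfactor t) (le_of_mul_le_mul_left hprod (by positivity))

theorem sum_dotProduct_inv_designMatrix_mulVec_le (ha : 0 < a) (hb : 0 < b) (hba : b ≤ a)
    (hφ : ∀ t, φ t ⬝ᵥ φ t ≤ 1) (T : ℕ) :
    ∑ t ∈ range T, φ t ⬝ᵥ (designMatrix a b φ t)⁻¹ *ᵥ φ t ≤
      2 / b * (Fintype.card n * log (1 + b * T / (a * Fintype.card n))) := by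
  have hterm : ∀ t, φ t ⬝ᵥ (designMatrix a b φ t)⁻¹ *ᵥ φ t ≤
      2 / b * log (1 + b * (φ t ⬝ᵥ (designMatrix a b φ t)⁻¹ *ᵥ φ t)) := fun t ↦ by
    set q := φ t ⬝ᵥ (designMatrix a b φ t)⁻¹ *ᵥ φ t
    have hq₀ : 0 ≤ q := dotProduct_inv_designMatrix_mulVec_nonneg ha hb.le t (φ t)
    have hbq : b * q ≤ 1 :=
      calc b * q ≤ b * ((φ t ⬝ᵥ φ t) / a) := by
            gcongr; exact dotProduct_inv_designMatrix_mulVec_le ha hb.le t (φ t)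
        _ ≤ b * (1 / a) := by gcongr; exact hφ t
        _ ≤ 1 := by rwa [mul_one_div, div_le_one ha]
    calc q = b * q / b := by field_simp
      _ ≤ 2 * log (1 + b * q) / b :=
        div_le_div_of_nonneg_right (le_two_mul_log_one_add (by positivity) hbq) hb.le
      _ = 2 / b * log (1 + b * q) := by ring
  calc _ ≤ ∑ t ∈ range T, 2 / b * log (1 + b * (φ t ⬝ᵥ (designMatrix a b φ t)⁻¹ *ᵥ φ t)) :=
        sum_le_sum fun t _ ↦ hterm t
    _ ≤ _ := by rw [← mul_sum]; gcongr; exact sum_log_one_add_le ha hb.le hφ T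

end DesignMatrix

theorem elliptical_potential_general (m T : ℕ)
    (lam σ : ℝ) (hlam : 0 < lam) (hratio : 1 ≤ σ ^ 2 / lam)
    (φ : ℕ → Fin m → ℝ) (hφ : ∀ t, Real.sqrt (φ t ⬝ᵥ φ t) ≤ 1) :
    ∑ t ∈ Finset.range T,
        φ t ⬝ᵥ (((1 / lam) • (1 : Matrix (Fin m) (Fin m) ℝ)
            + (1 / σ ^ 2) • ∑ τ ∈ Finset.range t, Matrix.vecMulVec (φ τ) (φ τ))⁻¹ *ᵥ φ t)
      ≤ 2 * m * σ ^ 2 * Real.log (1 + T * lam / (m * σ ^ 2)) := by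
  have hlamσ : lam ≤ σ ^ 2 := by rwa [le_div_iff₀ hlam, one_mul] at hratio
  have hσ2 : 0 < σ ^ 2 := hlam.trans_le hlamσ
  have hbound := sum_dotProduct_inv_designMatrix_mulVec_le (one_div_pos.mpr hlam)
    (one_div_pos.mpr hσ2) (one_div_le_one_div_of_le hlam hlamσ)
    (fun t ↦ sqrt_le_one.mp (hφ t)) T
  refine hbound.trans_eq ?_
  rw [Fintype.card_fin]
  simp only [div_eq_mul_inv, one_mul, mul_inv, inv_inv]
  ring_nf

/-- Elliptical potential lemma: if `σ²/λ ≥ 1` and `‖φ_t‖₂ ≤ 1`, then with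
`Σ_t = (1/λ)I + (1/σ²)∑_{τ<t} φ_τ φ_τᵀ`, one has
`∑_{t<T} φ_tᵀ Σ_t⁻¹ φ_t ≤ 2 m σ² log(1 + Tλ/(mσ²))`. -/
theorem elliptical_potential (m T : ℕ) (hm : 1 ≤ m) (hT : 1 ≤ T)
    (lam σ : ℝ) (hlam : 0 < lam) (hσ : 0 < σ) (hratio : 1 ≤ σ ^ 2 / lam)
    (φ : ℕ → Fin m → ℝ) (hφ : ∀ t, Real.sqrt (φ t ⬝ᵥ φ t) ≤ 1) :
    ∑ t ∈ Finset.range T,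
        φ t ⬝ᵥ (((1 / lam) • (1 : Matrix (Fin m) (Fin m) ℝ)
            + (1 / σ ^ 2) • ∑ τ ∈ Finset.range t, Matrix.vecMulVec (φ τ) (φ τ))⁻¹ *ᵥ φ t)
      ≤ 2 * m * σ ^ 2 * Real.log (1 + T * lam / (m * σ ^ 2)) :=
  elliptical_potential_general m T lam σ hlam hratio φ hφ
end

section
/- Let σ_c, σ_n, σ_γ > 0, set f = σ_c² + σ_n², and let t ≥ 1 be an integer. Define h_t = (t−1)/σ_n² − (t−2)σ_c²/(σ_n² f) + 1/σ_γ² and r_t = (1/σ_c² + 1/σ_n²) − 1/(σ_n⁴ h_t). Then h_t > 0, r_t = f·((t−1)σ_γ² + f) / ( σ_c² ( (t−1)σ_γ² σ_n² + σ_c² σ_γ² + f σ_n² ) ), and (1/r_t) · ( f/(σ_n² σ_c²) ) = 1 + σ_c² σ_γ² / ( (t−1) σ_γ² σ_n² + f σ_n² ). -/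
open Real

/-- Scalar identities for the predictive posterior precision in the isotropic Gaussian case:
`h_t > 0`, the closed form of `r_t`, and the value of `(1/r_t)·(f/(σn²σc²))`. -/
theorem predictive_posterior_precision_identities (σc σn σγ : ℝ)
    (hc : 0 < σc) (hn : 0 < σn) (hγ : 0 < σγ)
    (f h r : ℝ) (t : ℕ) (ht : 1 ≤ t)
    (hf : f = σc ^ 2 + σn ^ 2)
    (hh : h = ((t : ℝ) - 1) / σn ^ 2 - ((t : ℝ) - 2) * σc ^ 2 / (σn ^ 2 * f) + 1 / σγ ^ 2)
    (hr : r = (1 / σc ^ 2 + 1 / σn ^ 2) - 1 / (σn ^ 4 * h)) :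
    0 < h
    ∧ r = f * (((t : ℝ) - 1) * σγ ^ 2 + f)
        / (σc ^ 2 * (((t : ℝ) - 1) * σγ ^ 2 * σn ^ 2 + σc ^ 2 * σγ ^ 2 + f * σn ^ 2))
    ∧ (1 / r) * (f / (σn ^ 2 * σc ^ 2))
        = 1 + σc ^ 2 * σγ ^ 2 / (((t : ℝ) - 1) * σγ ^ 2 * σn ^ 2 + f * σn ^ 2) := by
  have hs : (0:ℝ) ≤ (t : ℝ) - 1 := by
    have : (1:ℝ) ≤ (t:ℝ) := by exact_mod_cast ht
    linarith
  have hc2 : (0:ℝ) < σc ^ 2 := by positivity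
  have hn2 : (0:ℝ) < σn ^ 2 := by positivity
  have hγ2 : (0:ℝ) < σγ ^ 2 := by positivity
  have hfpos : 0 < f := by rw [hf]; positivity
  set s : ℝ := (t : ℝ) - 1 with hsdef
  -- nice form of h
  have hD : 0 < s * σγ ^ 2 * σn ^ 2 + σc ^ 2 * σγ ^ 2 + f * σn ^ 2 := by positivity
  have hhval : h = (s * σγ ^ 2 * σn ^ 2 + σc ^ 2 * σγ ^ 2 + f * σn ^ 2) / (σn ^ 2 * f * σγ ^ 2) := by
    rw [hh, hf]
    field_simp
    ring
  have hhpos : 0 < h := by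
    rw [hhval]; positivity
  have hne : h ≠ 0 := ne_of_gt hhpos
  have hDne : s * σγ ^ 2 * σn ^ 2 + σc ^ 2 * σγ ^ 2 + f * σn ^ 2 ≠ 0 := ne_of_gt hD
  have hrval : r = f * (s * σγ ^ 2 + f)
      / (σc ^ 2 * (s * σγ ^ 2 * σn ^ 2 + σc ^ 2 * σγ ^ 2 + f * σn ^ 2)) := by
    rw [hr, hhval]
    rw [hf] at hDne ⊢
    field_simp
    ring
  have hE : 0 < s * σγ ^ 2 + f := by positivity
  refine ⟨hhpos, hrval, ?_⟩
  rw [hrval]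
  have hrne : f * (s * σγ ^ 2 + f)
      / (σc ^ 2 * (s * σγ ^ 2 * σn ^ 2 + σc ^ 2 * σγ ^ 2 + f * σn ^ 2)) ≠ 0 := by
    positivity
  rw [hf] at hDne hE ⊢
  field_simp
  ring
end

section
/- Let σ_c, σ_n, σ_γ > 0, set f = σ_c² + σ_n², let T ≥ 2 be an integer, and for each t ≥ 1 define b_t = (σ_c² σ_n²/f) · ( 1 + σ_c² σ_γ² / ( (t−1) σ_γ² σ_n² + f σ_n² ) ). Then Σ_{t=1}^T b_t ≤ (σ_c² σ_n²/f) T + σ_c⁴ σ_γ²/f² + (σ_c⁴/f)(1 + log(T−1)). -/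
/-! After the first round, the variance `b_t` exceeds its limit `σc²σn²/f` by at most
`(σc⁴/f)/(t - 1)`, so the excess summed over `t = 2, …, T` is `σc⁴/f` times a harmonic number,
which is at most `1 + log (T - 1)`. The first round contributes exactly `σc²σn²/f + σc⁴σγ²/f²`. -/

open Real Finset

theorem sum_Icc_le_of_le_add_div {b : ℕ → ℝ} {A B C : ℝ} (hB : 0 ≤ B) (h₁ : b 1 ≤ A + C)
    (hsucc : ∀ k : ℕ, b (k + 2) ≤ A + B / (k + 1)) (n : ℕ) :
    ∑ t ∈ Icc 1 (n + 1), b t ≤ A * (n + 1) + C + B * (1 + log n) := by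
  have hsplit : ∑ t ∈ Icc 1 (n + 1), b t = ∑ k ∈ range n, b (k + 2) + b 1 := by
    rw [← Ico_add_one_right_eq_Icc, sum_Ico_eq_sum_range, Nat.add_sub_cancel, sum_range_succ']
    ring_nf
  have hharmonic : ∑ k ∈ range n, B / (k + 1) = B * harmonic n := by
    simp [harmonic, div_eq_mul_inv, mul_sum]
  calc ∑ t ∈ Icc 1 (n + 1), b t
      ≤ ∑ k ∈ range n, (A + B / (k + 1)) + (A + C) := by
        rw [hsplit]; gcongr with k; exact hsucc k
    _ = A * (n + 1) + C + B * harmonic n := by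
        rw [sum_add_distrib, hharmonic]; simp; ring
    _ ≤ A * (n + 1) + C + B * (1 + log n) := by
        gcongr; exact harmonic_le_one_add_log n

/-- The paper's `b_t` is `posteriorVariance σc σn σγ f (t - 1)`. -/
noncomputable def posteriorVariance (σc σn σγ f x : ℝ) : ℝ :=
  σc ^ 2 * σn ^ 2 / f * (1 + σc ^ 2 * σγ ^ 2 / (x * σγ ^ 2 * σn ^ 2 + f * σn ^ 2))

theorem posteriorVariance_zero {σc σn σγ f : ℝ} (hn : σn ≠ 0) (hf : f ≠ 0) :
    posteriorVariance σc σn σγ f 0 = σc ^ 2 * σn ^ 2 / f + σc ^ 4 * σγ ^ 2 / f ^ 2 := by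
  simp only [posteriorVariance, zero_mul, zero_add]
  field_simp

theorem posteriorVariance_le {σc σn σγ f x : ℝ} (hn : 0 < σn) (hγ : 0 < σγ) (hf : 0 < f)
    (hx : 0 < x) :
    posteriorVariance σc σn σγ f x ≤ σc ^ 2 * σn ^ 2 / f + σc ^ 4 / f / x := by
  rw [posteriorVariance, mul_add, mul_one]
  gcongr
  calc σc ^ 2 * σn ^ 2 / f * (σc ^ 2 * σγ ^ 2 / (x * σγ ^ 2 * σn ^ 2 + f * σn ^ 2))
      ≤ σc ^ 2 * σn ^ 2 / f * (σc ^ 2 * σγ ^ 2 / (x * σγ ^ 2 * σn ^ 2)) := by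
        gcongr; exact le_add_of_nonneg_right (by positivity)
    _ = σc ^ 4 / f / x := by field_simp

theorem sum_posterior_variance_bound_general (σc σn σγ : ℝ)
    (hn : 0 < σn) (hγ : 0 < σγ)
    (f : ℝ) (hf : f = σc ^ 2 + σn ^ 2) (T : ℕ) (hT : 2 ≤ T)
    (b : ℕ → ℝ)
    (hb : ∀ t : ℕ, b t = (σc ^ 2 * σn ^ 2 / f)
      * (1 + σc ^ 2 * σγ ^ 2 / (((t : ℝ) - 1) * σγ ^ 2 * σn ^ 2 + f * σn ^ 2))) :
    ∑ t ∈ Finset.Icc 1 T, b t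
      ≤ (σc ^ 2 * σn ^ 2 / f) * T + σc ^ 4 * σγ ^ 2 / f ^ 2
        + (σc ^ 4 / f) * (1 + Real.log ((T : ℝ) - 1)) := by
  obtain ⟨n, rfl⟩ : ∃ n, T = n + 1 := ⟨T - 1, by omega⟩
  have hf₀ : 0 < f := hf ▸ by positivity
  have hb' (t : ℕ) : b t = posteriorVariance σc σn σγ f (t - 1) := hb t
  have h₁ : b 1 = σc ^ 2 * σn ^ 2 / f + σc ^ 4 * σγ ^ 2 / f ^ 2 := by
    rw [hb', Nat.cast_one, sub_self, posteriorVariance_zero hn.ne' hf₀.ne']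
  have hsucc (k : ℕ) : b (k + 2) ≤ σc ^ 2 * σn ^ 2 / f + σc ^ 4 / f / (k + 1) := by
    rw [hb']
    convert posteriorVariance_le hn hγ hf₀ k.cast_add_one_pos using 2
    push_cast; ring
  convert sum_Icc_le_of_le_add_div (by positivity) h₁.le hsucc n using 2 <;> push_cast <;> ring_nf

/-- Bound on the sum of the predictive posterior variances `b_t` in the isotropic Gaussian
case: `∑_{t=1}^T b_t ≤ (σc²σn²/f)T + σc⁴σγ²/f² + (σc⁴/f)(1 + log(T−1))`. -/
theorem sum_posterior_variance_bound (σc σn σγ : ℝ)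
    (hc : 0 < σc) (hn : 0 < σn) (hγ : 0 < σγ)
    (f : ℝ) (hf : f = σc ^ 2 + σn ^ 2) (T : ℕ) (hT : 2 ≤ T)
    (b : ℕ → ℝ)
    (hb : ∀ t : ℕ, b t = (σc ^ 2 * σn ^ 2 / f)
      * (1 + σc ^ 2 * σγ ^ 2 / (((t : ℝ) - 1) * σγ ^ 2 * σn ^ 2 + f * σn ^ 2))) :
    ∑ t ∈ Finset.Icc 1 T, b t
      ≤ (σc ^ 2 * σn ^ 2 / f) * T + σc ^ 4 * σγ ^ 2 / f ^ 2
        + (σc ^ 4 / f) * (1 + Real.log ((T : ℝ) - 1)) :=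
  sum_posterior_variance_bound_general σc σn σγ hn hγ f hf T hT b hb
end
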